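/- For every t ≥ 1, the capacity of the BGP(t) constraint equals the capacity of the (t,∞) run-length constraint: H_2(t) = C(t,∞) = log₂ ρ_t, where ρ_t is the unique real root in the open interval (1,2) of the polynomial z^{t+1} − z^t − 1. That is, (log₂|B_{2;t}(n)|)/n → log₂ ρ_t as n → ∞. (Corollary 6) -/

import Mathlib

/-- A binary sequence `x` of length `n` (0-indexed positions) satisfies the BGP(t)
constraint: for all positions `k, l, m` in the support of `x` (not necessarily
distinct) with `max {|k-l|, |l-m|, |m-k|} ≤ t`, if the integer `k + l - m` is a
valid position then it also lies in the support of `x`. -/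
def SatisfiesBGPt (t : ℕ) {n : ℕ} (x : Fin n → Fin 2) : Prop :=
  ∀ k l m : Fin n, (x k).val ≠ 0 → (x l).val ≠ 0 → (x m).val ≠ 0 →
    max (max |((k : ℕ) : ℤ) - ((l : ℕ) : ℤ)| |((l : ℕ) : ℤ) - ((m : ℕ) : ℤ)|)
        |((m : ℕ) : ℤ) - ((k : ℕ) : ℤ)| ≤ (t : ℤ) →
    ∀ i : Fin n, ((i : ℕ) : ℤ) = ((k : ℕ) : ℤ) + ((l : ℕ) : ℤ) - ((m : ℕ) : ℤ) →
      (x i).val ≠ 0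

/-- `B2t t n`: the set of binary sequences of length `n` satisfying BGP(t). -/
def B2t (t n : ℕ) : Set (Fin n → Fin 2) := {x | SatisfiesBGPt t x}

/-!
Every (t,∞)-sequence satisfies BGP(t): three ones pairwise within distance `t` must coincide.
Conversely, if a BGP(t) sequence has two ones within distance `t`, reflecting ones through nearby
ones shows that its support consists of all positions in one residue class modulo the least gap
`d ≤ t` between its ones, so there are at most `(t + 1)²` such sequences. Hence `|B_{2;t}(n)|`
exceeds the number `S(n)` of (t,∞)-sequences by a bounded amount, and splitting off the last
symbol gives `S(n + t + 1) = S(n + t) + S(n)`, which squeezes `S(n)` between constant multiples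
of `ρ_t ^ n`.
-/

open Filter Topology Set Real

/-- The `(t, ∞)` constraint: at least `t` zeros between any two ones. -/
def IsRLL (t : ℕ) {n : ℕ} (x : Fin n → Fin 2) : Prop :=
  ∀ k l : Fin n, x k ≠ 0 → x l ≠ 0 → k < l → (k : ℕ) + t < l

def rllSet (t n : ℕ) : Set (Fin n → Fin 2) := {x | IsRLL t x}

theorem rllSet_subset_B2t (t n : ℕ) : rllSet t n ⊆ B2t t n := by
  intro x hx k l m hk hl hm hdist i hi
  simp only [Fin.val_ne_zero_iff] at hk hl hm ⊢
  have hkm : k = m := by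
    have hmk : |((m : ℕ) : ℤ) - (k : ℕ)| ≤ t := (le_max_right _ _).trans hdist
    rw [abs_le] at hmk
    by_contra hne
    rcases lt_or_gt_of_ne hne with h | h
    · have := hx k m hk hm h; omega
    · have := hx m k hm hk h; omega
  subst hkm
  rwa [show i = l from Fin.ext (by omega)]

namespace IsRLL

variable {t n : ℕ}

theorem comp {m c : ℕ} {x : Fin n → Fin 2} (hx : IsRLL t x) (f : Fin m → Fin n)
    (hf : ∀ i, (f i : ℕ) = i + c) : IsRLL t (x ∘ f) := by
  intro k l hk hl hkl
  have := hx _ _ hk hl (by rw [Fin.lt_def, hf, hf]; omega)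
  rw [hf, hf] at this
  omega

theorem snoc_zero {x : Fin n → Fin 2} (hx : IsRLL t x) :
    IsRLL t (Fin.snoc x 0 : Fin (n + 1) → Fin 2) := by
  intro k l hk hl hkl
  induction k using Fin.lastCases with
  | last => simp at hk
  | cast k =>
    induction l using Fin.lastCases with
    | last => simp at hl
    | cast l =>
      simp only [Fin.snoc_castSucc, Fin.castSucc_lt_castSucc_iff, Fin.val_castSucc] at *
      exact hx k l hk hl hkl

theorem eq_zero_of_lt_of_le_add {x : Fin n → Fin 2} (hx : IsRLL t x) {k l : Fin n}
    (hl : x l ≠ 0) (hkl : k < l) (hlk : (l : ℕ) ≤ k + t) : x k = 0 := by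
  by_contra hk
  have := hx k l hk hl hkl
  omega

theorem append_snoc_one {x : Fin n → Fin 2} (hx : IsRLL t x) :
    IsRLL t (Fin.append x (Fin.snoc 0 1 : Fin (t + 1) → Fin 2)) := by
  have hlast : ∀ j : Fin (t + 1), (Fin.snoc 0 1 : Fin (t + 1) → Fin 2) j ≠ 0 → (j : ℕ) = t := by
    intro j hj
    induction j using Fin.lastCases with
    | last => simp
    | cast j => simp at hj
  intro k l hk hl hkl
  induction k using Fin.addCases with
  | left k =>
    induction l using Fin.addCases with
    | left l =>
      rw [Fin.append_left] at hk hl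
      exact hx k l hk hl hkl
    | right l =>
      rw [Fin.append_right] at hl
      simp only [Fin.val_castAdd, Fin.val_natAdd, hlast l hl]
      omega
  | right k =>
    induction l using Fin.addCases with
    | left l => rw [Fin.lt_def] at hkl; simp at hkl; omega
    | right l =>
      rw [Fin.append_right] at hk hl
      rw [Fin.lt_def] at hkl
      simp only [Fin.val_natAdd, hlast k hk, hlast l hl] at hkl
      omega

end IsRLL

/-- Splitting off the last symbol; a final `1` forces the `t` symbols before it to be `0`. -/
def rllSetSplit (t n : ℕ) : rllSet t (n + t + 1) ≃ rllSet t (n + t) ⊕ rllSet t n where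
  toFun x :=
    if x.1 (Fin.last _) = 0 then .inl ⟨Fin.init x.1, IsRLL.comp x.2 _ (c := 0) fun _ => rfl⟩
    else .inr ⟨fun i => x.1 (Fin.castAdd (t + 1) i), IsRLL.comp x.2 _ (c := 0) fun _ => rfl⟩
  invFun := Sum.elim (fun y => ⟨Fin.snoc y.1 0, IsRLL.snoc_zero y.2⟩)
    (fun y => ⟨Fin.append (m := n) y.1 (Fin.snoc (0 : Fin t → Fin 2) 1), IsRLL.append_snoc_one y.2⟩)
  left_inv x := by
    by_cases hx : x.1 (Fin.last _) = 0
    · simp only [hx, if_true, Sum.elim_inl]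
      refine Subtype.ext ?_
      show Fin.snoc (Fin.init x.1) 0 = x.1
      conv_rhs => rw [← Fin.snoc_init_self x.1]
      rw [hx]
    · simp only [hx, if_false, Sum.elim_inr]
      refine Subtype.ext ?_
      dsimp only
      conv_rhs => rw [← Fin.append_castAdd_natAdd (m := n) (n := t + 1) (f := x.1)]
      congr 1
      funext j
      induction j using Fin.lastCases with
      | last => rw [Fin.snoc_last, Fin.natAdd_last]; omega
      | cast j =>
        rw [Fin.snoc_castSucc]
        refine (IsRLL.eq_zero_of_lt_of_le_add x.2 hx ?_ ?_).symm
        · rw [Fin.lt_def]; simp only [Fin.val_natAdd, Fin.val_castSucc, Fin.val_last]; omega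
        · simp only [Fin.val_natAdd, Fin.val_castSucc, Fin.val_last]; omega
  right_inv y := by
    rcases y with y | y
    · simp [Fin.init_snoc]
    · have hlast :
          Fin.append (m := n) y.1 (Fin.snoc (0 : Fin t → Fin 2) 1) (Fin.last (n + t)) = 1 := by
        rw [← Fin.natAdd_last, Fin.append_right, Fin.snoc_last]
      simp [hlast]

theorem card_rllSet_add_succ (t n : ℕ) :
    Nat.card (rllSet t (n + t + 1)) = Nat.card (rllSet t (n + t)) + Nat.card (rllSet t n) := by
  rw [Nat.card_congr (rllSetSplit t n), Nat.card_sum]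

theorem add_mul_mem_Ico {a b u e : ℤ} {k m : ℕ} (hkm : k ≤ m) (hu : u ∈ Ico a b)
    (hm : u + m * e ∈ Ico a b) : u + k * e ∈ Ico a b := by
  have hkm' : (k : ℤ) ≤ m := by exact_mod_cast hkm
  have hk : (0 : ℤ) ≤ k := by positivity
  obtain ⟨hu₁, hu₂⟩ := hu
  obtain ⟨hm₁, hm₂⟩ := hm
  rcases le_total 0 e with he | he
  · constructor <;> nlinarith
  · constructor <;> nlinarith

/-- The case `k = l` of BGP(t), for a set `S ⊆ [0, n)` of integer positions: the reflection
`2v - u` of `u` through a nearby `v` stays in `S` whenever it is a position. -/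
structure ReflClosed (t n : ℕ) (S : Set ℤ) : Prop where
  subset_Ico : S ⊆ Ico 0 (n : ℤ)
  reflect_mem : ∀ u ∈ S, ∀ v ∈ S, |v - u| ≤ t → 2 * v - u ∈ Ico 0 (n : ℤ) → 2 * v - u ∈ S

namespace ReflClosed

variable {t n : ℕ} {S : Set ℤ}

theorem add_mul_mem (hS : ReflClosed t n S) {u e : ℤ} (hu : u ∈ S) (hue : u + e ∈ S)
    (he : |e| ≤ t) (p : ℕ) (hp : u + p * e ∈ Ico 0 (n : ℤ)) : u + p * e ∈ S := by
  induction p using Nat.twoStepInduction with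
  | zero => simpa using hu
  | one => simpa using hue
  | more p ih₀ ih₁ =>
    have hu' := hS.subset_Ico hu
    have h₀ := ih₀ (add_mul_mem_Ico (by omega) hu' hp)
    have h₁ := ih₁ (add_mul_mem_Ico (by omega) hu' hp)
    have hrefl : 2 * (u + ↑(p + 1) * e) - (u + p * e) = u + ↑(p + 2) * e := by push_cast; ring
    rw [← hrefl] at hp ⊢
    exact hS.reflect_mem _ h₀ _ h₁ (by push_cast; ring_nf; exact he) hp

theorem mem_of_dvd_sub (hS : ReflClosed t n S) {a : ℤ} {d : ℕ} (ha : a ∈ S) (had : a + d ∈ S)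
    (hdt : d ≤ t) {i : ℤ} (hi : i ∈ Ico 0 (n : ℤ)) (hdvd : (d : ℤ) ∣ i - a) : i ∈ S := by
  obtain ⟨q, hq⟩ := hdvd
  have hd : |(d : ℤ)| ≤ t := by rw [abs_of_nonneg (by omega)]; omega
  obtain ⟨p, rfl | rfl⟩ := Int.eq_nat_or_neg q
  · have hup : a + p * d = i := by linarith
    rw [← hup] at hi ⊢
    exact hS.add_mul_mem ha had hd p hi
  · have hdown : a + d + ((p + 1 : ℕ) : ℤ) * (-d) = i := by push_cast; linarith
    rw [← hdown] at hi ⊢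
    exact hS.add_mul_mem had (by simpa using ha) (by rwa [abs_neg]) _ hi

theorem dvd_sub_of_mem (hS : ReflClosed t n S) {a : ℤ} {d : ℕ} (ha : a ∈ S) (had : a + d ∈ S)
    (hd : 0 < d) (hdt : d ≤ t) (hmin : ∀ w ∈ S, ∀ z ∈ S, w < z → (d : ℤ) ≤ z - w) {i : ℤ}
    (hiS : i ∈ S) : (d : ℤ) ∣ i - a := by
  rw [Int.dvd_iff_emod_eq_zero]
  by_contra hr
  have hr₀ : 0 ≤ (i - a) % d := Int.emod_nonneg _ (by omega)
  have hr₁ : (i - a) % d < d := Int.emod_lt_of_pos _ (by omega)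
  have hcd : (d : ℤ) ∣ (i - (i - a) % d) - a := ⟨(i - a) / d, by rw [Int.emod_def]; ring⟩
  have hi := hS.subset_Ico hiS
  have had' := hS.subset_Ico had
  have ha' := hS.subset_Ico ha
  simp only [mem_Ico] at hi had' ha'
  generalize (i - a) % d = r at *
  -- one of the two points of the class next to `i` is a position, and it is closer than `d`
  rcases le_or_gt 0 (i - r) with h | h
  · have := hmin _ (hS.mem_of_dvd_sub ha had hdt ⟨h, by omega⟩ hcd) _ hiS (by omega)
    omega
  · have hcd' : (d : ℤ) ∣ (i - r + d) - a := by
      rw [show i - r + d - a = i - r - a + d by ring]; exact dvd_add hcd dvd_rfl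
    have := hmin _ hiS _ (hS.mem_of_dvd_sub ha had hdt ⟨by omega, by omega⟩ hcd') (by omega)
    omega

theorem exists_dvd_iff (hS : ReflClosed t n S) (hclose : ∃ u ∈ S, ∃ v ∈ S, u < v ∧ v ≤ u + t) :
    ∃ d : ℕ, 0 < d ∧ d ≤ t ∧ ∃ a ∈ S, ∀ i ∈ Ico 0 (n : ℤ), i ∈ S ↔ (d : ℤ) ∣ i - a := by
  classical
  obtain ⟨u, hu, v, hv, huv, hvu⟩ := hclose
  have hgap : ∀ w ∈ S, ∀ z ∈ S, w < z → 0 < (z - w).toNat ∧ ∃ a ∈ S, a + (z - w).toNat ∈ S :=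
    fun w hw z hz hwz => ⟨by omega, w, hw, by rwa [Int.toNat_of_nonneg (by omega), add_sub_cancel]⟩
  have hex : ∃ d : ℕ, 0 < d ∧ ∃ a ∈ S, a + d ∈ S := ⟨_, hgap u hu v hv huv⟩
  obtain ⟨hd, a, ha, had⟩ := Nat.find_spec hex
  have hmin : ∀ w ∈ S, ∀ z ∈ S, w < z → (Nat.find hex : ℤ) ≤ z - w := fun w hw z hz hwz => by
    have := Nat.find_min' hex (hgap w hw z hz hwz)
    omega
  have hdt : Nat.find hex ≤ t := by have := hmin u hu v hv huv; omega
  exact ⟨_, hd, hdt, a, ha, fun i hi =>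
    ⟨hS.dvd_sub_of_mem ha had hd hdt hmin, hS.mem_of_dvd_sub ha had hdt hi⟩⟩

end ReflClosed

def intSupport {n : ℕ} (x : Fin n → Fin 2) : Set ℤ := {i | ∃ k : Fin n, x k ≠ 0 ∧ ((k : ℕ) : ℤ) = i}

theorem natCast_mem_intSupport {n : ℕ} {x : Fin n → Fin 2} {k : Fin n} :
    ((k : ℕ) : ℤ) ∈ intSupport x ↔ x k ≠ 0 := by
  refine ⟨fun ⟨l, hl, hlk⟩ => ?_, fun hk => ⟨k, hk, rfl⟩⟩
  rwa [show l = k from Fin.ext (by omega)] at hl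

theorem reflClosed_intSupport {t n : ℕ} {x : Fin n → Fin 2} (hx : x ∈ B2t t n) :
    ReflClosed t n (intSupport x) where
  subset_Ico := by
    rintro _ ⟨k, -, rfl⟩
    exact ⟨by positivity, by exact_mod_cast k.isLt⟩
  reflect_mem := by
    rintro _ ⟨k, hk, rfl⟩ _ ⟨l, hl, rfl⟩ hkl ⟨h₀, hn⟩
    rw [← Fin.val_ne_zero_iff] at hk hl
    refine ⟨⟨(2 * (l : ℤ) - k).toNat, by omega⟩, ?_, by simp; omega⟩
    rw [← Fin.val_ne_zero_iff]
    refine hx l l k hl hl hk ?_ _ (by simp; omega)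
    rw [abs_le] at hkl
    simp only [sub_self, abs_zero, max_le_iff, abs_le]
    omega

def residueSeq {n : ℕ} (d r : ℕ) : Fin n → Fin 2 := fun i => if (i : ℕ) % d = r then 1 else 0

theorem mem_range_residueSeq {t n : ℕ} {x : Fin n → Fin 2} (hx : x ∈ B2t t n)
    (hx' : x ∉ rllSet t n) :
    x ∈ range fun p : Fin (t + 1) × Fin (t + 1) => residueSeq (p.1 : ℕ) (p.2 : ℕ) := by
  simp only [rllSet, IsRLL, mem_ofPred_eq, not_forall, not_lt] at hx'
  obtain ⟨k, l, hk, hl, hkl, hlk⟩ := hx'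
  obtain ⟨d, hd, hdt, -, ⟨a, -, rfl⟩, hiff⟩ := (reflClosed_intSupport hx).exists_dvd_iff
    ⟨k, natCast_mem_intSupport.2 hk, l, natCast_mem_intSupport.2 hl, by simp [hkl], by omega⟩
  refine ⟨(⟨d, by omega⟩, ⟨a % d, by have := Nat.mod_lt a hd; omega⟩), funext fun i => ?_⟩
  have hi := hiff i ⟨by positivity, by exact_mod_cast i.isLt⟩
  rw [natCast_mem_intSupport, ← Nat.modEq_iff_dvd] at hi
  simp only [residueSeq, Nat.ModEq] at hi ⊢
  split_ifs with h <;> omega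

theorem card_B2t_le (t n : ℕ) : Nat.card (B2t t n) ≤ Nat.card (rllSet t n) + (t + 1) ^ 2 := by
  set f := fun p : Fin (t + 1) × Fin (t + 1) => (residueSeq (p.1 : ℕ) (p.2 : ℕ) : Fin n → Fin 2)
  have hsub : B2t t n ⊆ rllSet t n ∪ range f := fun x hx =>
    or_iff_not_imp_left.2 (mem_range_residueSeq hx)
  calc Nat.card (B2t t n) ≤ Nat.card ↥(rllSet t n ∪ range f) := Nat.card_mono (toFinite _) hsub
    _ ≤ Nat.card (rllSet t n) + Nat.card (range f) := Set.card_union_le _ _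
    _ ≤ Nat.card (rllSet t n) + (t + 1) ^ 2 := by
      grw [Finite.card_range_le f]
      simp [sq]

theorem le_of_add_recurrence {α : Type*} [AddCommMonoid α] [PartialOrder α]
    [IsOrderedAddMonoid α] {t : ℕ} {a b : ℕ → α} (ha : ∀ n, a (n + t + 1) ≤ a (n + t) + a n)
    (hb : ∀ n, b (n + t) + b n ≤ b (n + t + 1)) (hinit : ∀ n ≤ t, a n ≤ b n) (n : ℕ) :
    a n ≤ b n := by
  induction n using Nat.strong_induction_on with
  | _ n ih =>
    rcases le_or_gt n t with hn | hn
    · exact hinit n hn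
    obtain ⟨m, rfl⟩ : ∃ m, n = m + t + 1 := ⟨n - t - 1, by omega⟩
    calc a (m + t + 1) ≤ a (m + t) + a m := ha m
      _ ≤ b (m + t) + b m := add_le_add (ih _ (by omega)) (ih _ (by omega))
      _ ≤ b (m + t + 1) := hb m

theorem mul_pow_add_recurrence {ρ : ℝ} {t : ℕ} (hρ : ρ ^ (t + 1) = ρ ^ t + 1) (c : ℝ) (n : ℕ) :
    c * ρ ^ (n + t + 1) = c * ρ ^ (n + t) + c * ρ ^ n := by
  rw [add_assoc, pow_add, hρ]
  ring

theorem card_rllSet_pow_bounds {ρ : ℝ} {t : ℕ} (hρ₁ : 1 ≤ ρ) (hρ : ρ ^ (t + 1) = ρ ^ t + 1)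
    (n : ℕ) : (ρ ^ t)⁻¹ * ρ ^ n ≤ Nat.card (rllSet t n) ∧
      (Nat.card (rllSet t n) : ℝ) ≤ 2 ^ t * ρ ^ n := by
  have hrec (n : ℕ) : (Nat.card (rllSet t (n + t + 1)) : ℝ) =
      Nat.card (rllSet t (n + t)) + Nat.card (rllSet t n) := by
    exact_mod_cast card_rllSet_add_succ t n
  constructor
  · refine le_of_add_recurrence (a := fun n => (ρ ^ t)⁻¹ * ρ ^ n)
      (b := fun n => (Nat.card (rllSet t n) : ℝ)) (mul_pow_add_recurrence hρ _ · |>.le)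
      (hrec · |>.ge) (fun m hm => ?_) n
    have hpos : (0 : ℝ) < ρ ^ t := by positivity
    have : Nonempty (rllSet t m) := ⟨⟨0, fun k _ hk => (hk rfl).elim⟩⟩
    calc (ρ ^ t)⁻¹ * ρ ^ m ≤ (ρ ^ t)⁻¹ * ρ ^ t := by gcongr
      _ = 1 := inv_mul_cancel₀ hpos.ne'
      _ ≤ Nat.card (rllSet t m) := by exact_mod_cast Nat.card_pos
  · refine le_of_add_recurrence (a := fun n => (Nat.card (rllSet t n) : ℝ))
      (b := fun n => 2 ^ t * ρ ^ n) (hrec · |>.le) (mul_pow_add_recurrence hρ _ · |>.ge)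
      (fun m hm => ?_) n
    calc (Nat.card (rllSet t m) : ℝ) ≤ Nat.card (Fin m → Fin 2) := by
          exact_mod_cast Finite.card_subtype_le _
      _ = 2 ^ m := by simp
      _ ≤ 2 ^ t * 1 := by rw [mul_one]; gcongr; norm_num
      _ ≤ 2 ^ t * ρ ^ m := by gcongr; exact one_le_pow₀ hρ₁

theorem card_B2t_pow_bounds {ρ : ℝ} {t : ℕ} (hρ₁ : 1 ≤ ρ) (hρ : ρ ^ (t + 1) = ρ ^ t + 1)
    (n : ℕ) : (ρ ^ t)⁻¹ * ρ ^ n ≤ Nat.card (B2t t n) ∧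
      (Nat.card (B2t t n) : ℝ) ≤ (2 ^ t + (t + 1) ^ 2) * ρ ^ n := by
  obtain ⟨hlow, hup⟩ := card_rllSet_pow_bounds hρ₁ hρ n
  have hle : (Nat.card (rllSet t n) : ℝ) ≤ Nat.card (B2t t n) := by
    exact_mod_cast Nat.card_mono (toFinite _) (rllSet_subset_B2t t n)
  have hge : (Nat.card (B2t t n) : ℝ) ≤ Nat.card (rllSet t n) + (t + 1) ^ 2 := by
    exact_mod_cast card_B2t_le t n
  have hpow : (1 : ℝ) ≤ ρ ^ n := one_le_pow₀ hρ₁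
  refine ⟨hlow.trans hle, hge.trans ?_⟩
  nlinarith

theorem tendsto_logb_div_of_pow_bounds {b ρ c C : ℝ} {a : ℕ → ℝ} (hb : 1 < b) (hρ : 0 < ρ)
    (hc : 0 < c) (ha : ∀ n, c * ρ ^ n ≤ a n ∧ a n ≤ C * ρ ^ n) :
    Tendsto (fun n : ℕ => logb b (a n) / n) atTop (𝓝 (logb b ρ)) := by
  have hC : 0 < C := by simpa using hc.trans_le (by simpa using (ha 0).1.trans (ha 0).2)
  have hlogb (K : ℝ) (hK : 0 < K) (n : ℕ) (hn : 0 < n) :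
      logb b (K * ρ ^ n) / n = logb b K / n + logb b ρ := by
    rw [logb_mul hK.ne' (pow_pos hρ n).ne', logb_pow]
    field_simp
  have hlim (K : ℝ) : Tendsto (fun n : ℕ => logb b K / n + logb b ρ) atTop (𝓝 (logb b ρ)) := by
    simpa using (tendsto_const_div_atTop_nhds_zero_nat (logb b K)).add_const (logb b ρ)
  refine tendsto_of_tendsto_of_tendsto_of_le_of_le' (hlim c) (hlim C) ?_ ?_ <;>
    filter_upwards [eventually_gt_atTop 0] with n hn
  · rw [← hlogb c hc n hn]
    gcongr
    exact (ha n).1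
  · rw [← hlogb C hC n hn]
    gcongr
    · exact (by positivity : 0 < c * ρ ^ n).trans_le (ha n).1
    · exact (ha n).2

theorem existsUnique_root_Ioo {t : ℕ} (ht : 1 ≤ t) :
    ∃! ρ : ℝ, ρ ∈ Ioo (1 : ℝ) 2 ∧ ρ ^ (t + 1) - ρ ^ t - 1 = 0 := by
  set f : ℝ → ℝ := fun z => z ^ (t + 1) - z ^ t - 1
  have hmono : StrictMonoOn f (Ici 1) := by
    intro x hx y hy hxy
    have hx' : (0 : ℝ) ≤ x - 1 := by simp only [mem_Ici] at hx; linarith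
    have hxy' : x ^ t ≤ y ^ t := by gcongr; simp only [mem_Ici] at hx; linarith
    have hy' : 0 < y ^ t := by simp only [mem_Ici] at hy; positivity
    simp only [f, pow_succ]
    nlinarith
  have h₂ : 0 < f 2 := by
    have : (2 : ℝ) ≤ 2 ^ t := by simpa using pow_le_pow_right₀ (by norm_num : (1 : ℝ) ≤ 2) ht
    simp only [f, pow_succ]
    linarith
  obtain ⟨ρ, hρ, hρ₀⟩ := intermediate_value_Ioo (by norm_num)
    (by fun_prop : ContinuousOn f (Icc 1 2)) ⟨by norm_num [f], h₂⟩
  refine ⟨ρ, ⟨hρ, hρ₀⟩, fun σ ⟨hσ, hσ₀⟩ => hmono.injOn (mem_Ici.2 hσ.1.le)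
    (mem_Ici.2 hρ.1.le) (hσ₀.trans hρ₀.symm)⟩

/-- **Corollary 6.** For every `t ≥ 1`, the polynomial `z^{t+1} - z^t - 1` has a
unique real root `ρ_t` in the open interval `(1, 2)`, and the capacity of the
BGP(t) constraint equals `log₂ ρ_t`:
`(log₂|B_{2;t}(n)|)/n → log₂ ρ_t` as `n → ∞`. -/
theorem bgp_t_capacity (t : ℕ) (ht : 1 ≤ t) :
    (∃! ρ : ℝ, ρ ∈ Set.Ioo (1 : ℝ) 2 ∧ ρ ^ (t + 1) - ρ ^ t - 1 = 0) ∧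
    ∀ ρ : ℝ, ρ ∈ Set.Ioo (1 : ℝ) 2 → ρ ^ (t + 1) - ρ ^ t - 1 = 0 →
      Filter.Tendsto (fun n : ℕ => Real.logb 2 (Nat.card ↥(B2t t n)) / (n : ℝ))
        Filter.atTop (nhds (Real.logb 2 ρ)) := by
  refine ⟨existsUnique_root_Ioo ht, fun ρ hρ hroot => ?_⟩
  have hρ₁ : 1 ≤ ρ := hρ.1.le
  exact tendsto_logb_div_of_pow_bounds one_lt_two (by positivity) (by positivity)
    (card_B2t_pow_bounds hρ₁ (by linarith))
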